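/- arXiv:2312.06813 — 3 statements merged into one kernel-verified Lean document; each statement's English description precedes it below -/
import Mathlib

section
/- Let τ₁, τ₂ be reflection positive functionals with respect to data (𝒜₁,𝒜₁⁺,𝒜₁⁻,θ₁) and (𝒜₂,𝒜₂⁺,𝒜₂⁻,θ₂). Then the tensor product functional τ₁ ⊗ τ₂ on 𝒜₁ ⊗ 𝒜₂ is reflection positive with respect to (𝒜₁ ⊗ 𝒜₂, 𝒜₁⁺ ⊗ 𝒜₂⁺, 𝒜₁⁻ ⊗ 𝒜₂⁻, θ₁ ⊗ θ₂). -/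
open scoped ComplexOrder TensorProduct

open Matrix

/-!
Write `c = ∑ xᵢ ⊗ yᵢ` with `xᵢ ∈ 𝒜₁⁺`, `yᵢ ∈ 𝒜₂⁺`. Then `(τ₁ ⊗ τ₂)(θ(c) c)` is the sum of the
entries of the Hadamard product of the Gram matrices `τ₁(θ₁(xᵢ) xⱼ)` and `τ₂(θ₂(yᵢ) yⱼ)`. Reflection
positivity says exactly that each Gram matrix is positive semidefinite, hence so is their Hadamard
product by the Schur product theorem, and the entry sum of a positive semidefinite matrix `M` is
`1ᴴ M 1 ≥ 0`.
-/

namespace Matrix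

variable {n : Type*} [Fintype n]

-- Over `ℂ`, Hermiticity follows from the quadratic form being real, by polarization.
theorem posSemidef_of_forall_dotProduct_mulVec_nonneg {M : Matrix n n ℂ}
    (h : ∀ x, 0 ≤ star x ⬝ᵥ (M *ᵥ x)) : M.PosSemidef := by
  classical
  refine .of_dotProduct_mulVec_nonneg ?_ h
  rw [← isSymmetric_toEuclideanLin_iff, LinearMap.isSymmetric_iff_inner_map_self_real]
  intro x
  have hx : IsSelfAdjoint (star x.ofLp ⬝ᵥ M *ᵥ x.ofLp) := (h x.ofLp).isSelfAdjoint
  have hinner : x.ofLp ⬝ᵥ star (M *ᵥ x.ofLp) = star (star x.ofLp ⬝ᵥ M *ᵥ x.ofLp) := by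
    rw [star_dotProduct, star_star, dotProduct_comm]
  rw [EuclideanSpace.inner_eq_star_dotProduct, ofLp_toLpLin, toLin'_apply, hinner, hx.star_eq]
  exact hx

theorem PosSemidef.sum_sum_nonneg {R : Type*} [CommRing R] [PartialOrder R] [StarRing R]
    {M : Matrix n n R} (hM : M.PosSemidef) : 0 ≤ ∑ i, ∑ j, M i j := by
  simpa [dotProduct, mulVec] using hM.dotProduct_mulVec_nonneg 1

end Matrix

theorem TensorProduct.exists_sum_tmul_of_mem_span {R M N : Type*} [CommSemiring R]
    [AddCommMonoid M] [AddCommMonoid N] [Module R M] [Module R N]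
    {p : Submodule R M} {q : Submodule R N} {c : M ⊗[R] N}
    (hc : c ∈ Submodule.span R {z | ∃ x ∈ p, ∃ y ∈ q, z = x ⊗ₜ y}) :
    ∃ (n : ℕ) (x : Fin n → M) (y : Fin n → N),
      (∀ i, x i ∈ p) ∧ (∀ i, y i ∈ q) ∧ c = ∑ i, x i ⊗ₜ y i := by
  obtain ⟨n, a, z, rfl⟩ := Submodule.mem_span_set'.1 hc
  choose x hx y hy hz using fun i => (z i).2
  refine ⟨n, fun i => a i • x i, y, fun i => p.smul_mem _ (hx i), hy, ?_⟩
  simp only [hz, TensorProduct.smul_tmul']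

section ReflectionPositivity

variable {A : Type*} [Ring A] [Algebra ℂ A] (θ : A →ₛₗ[starRingEnd ℂ] A) (τ : A →ₗ[ℂ] ℂ)

def reflectionGram {ι : Type*} (x : ι → A) : Matrix ι ι ℂ :=
  Matrix.of fun i j => τ (θ (x i) * x j)

theorem star_dotProduct_reflectionGram_mulVec {ι : Type*} [Fintype ι] (x : ι → A) (v : ι → ℂ) :
    star v ⬝ᵥ reflectionGram θ τ x *ᵥ v = τ (θ (∑ i, v i • x i) * ∑ i, v i • x i) := by
  simp only [map_sum, LinearMap.map_smulₛₗ, Finset.sum_mul, Finset.mul_sum, smul_mul_smul_comm,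
    smul_eq_mul, RingHom.id_apply, dotProduct, mulVec, reflectionGram, of_apply,
    Pi.star_apply, RCLike.star_def]
  rw [Finset.sum_comm]
  exact Finset.sum_congr rfl fun i _ => Finset.sum_congr rfl fun j _ => by ring

theorem posSemidef_reflectionGram {ι : Type*} [Fintype ι] {P : Submodule ℂ A}
    (hRP : ∀ a ∈ P, 0 ≤ τ (θ a * a)) {x : ι → A} (hx : ∀ i, x i ∈ P) :
    (reflectionGram θ τ x).PosSemidef :=
  posSemidef_of_forall_dotProduct_mulVec_nonneg fun v => by
    rw [star_dotProduct_reflectionGram_mulVec]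
    exact hRP _ (P.sum_mem fun i _ => P.smul_mem _ (hx i))

end ReflectionPositivity

theorem tensor_product_reflection_positive_general
    {A1 A2 : Type*} [Ring A1] [Ring A2] [Algebra ℂ A1] [Algebra ℂ A2]
    (P1 : Subalgebra ℂ A1) (P2 : Subalgebra ℂ A2)
    (θ1 : A1 →ₛₗ[starRingEnd ℂ] A1) (θ2 : A2 →ₛₗ[starRingEnd ℂ] A2)
    (τ1 : A1 →ₗ[ℂ] ℂ) (τ2 : A2 →ₗ[ℂ] ℂ)
    (hRP1 : ∀ a ∈ P1, 0 ≤ τ1 (θ1 a * a))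
    (hRP2 : ∀ a ∈ P2, 0 ≤ τ2 (θ2 a * a))
    (θ : (A1 ⊗[ℂ] A2) →ₛₗ[starRingEnd ℂ] (A1 ⊗[ℂ] A2))
    (hθ : ∀ (x : A1) (y : A2), θ (x ⊗ₜ y) = θ1 x ⊗ₜ θ2 y)
    (T : (A1 ⊗[ℂ] A2) →ₗ[ℂ] ℂ)
    (hT : ∀ (x : A1) (y : A2), T (x ⊗ₜ y) = τ1 x * τ2 y) :
    ∀ c ∈ Submodule.span ℂ
        {z : A1 ⊗[ℂ] A2 | ∃ x ∈ P1, ∃ y ∈ P2, z = x ⊗ₜ y},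
      0 ≤ T (θ c * c) := by
  intro c hc
  obtain ⟨n, x, y, hx, hy, rfl⟩ :=
    TensorProduct.exists_sum_tmul_of_mem_span (p := P1.toSubmodule) (q := P2.toSubmodule) hc
  have hexpand : T (θ (∑ i, x i ⊗ₜ y i) * ∑ i, x i ⊗ₜ y i)
      = ∑ i, ∑ j, (reflectionGram θ1 τ1 x ⊙ reflectionGram θ2 τ2 y) i j := by
    simp only [map_sum, hθ, Finset.sum_mul, Finset.mul_sum, Algebra.TensorProduct.tmul_mul_tmul,
      hT, hadamard_apply, reflectionGram, of_apply]
    rw [Finset.sum_comm]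
  rw [hexpand]
  exact ((posSemidef_reflectionGram θ1 τ1 hRP1 hx).hadamard
    (posSemidef_reflectionGram θ2 τ2 hRP2 hy)).sum_sum_nonneg

/-- The tensor product of two reflection positive functionals is reflection
positive with respect to the tensor-product data
`(𝒜₁ ⊗ 𝒜₂, 𝒜₁⁺ ⊗ 𝒜₂⁺, 𝒜₁⁻ ⊗ 𝒜₂⁻, θ₁ ⊗ θ₂)`. -/
theorem tensor_product_reflection_positive
    {A1 A2 : Type*} [Ring A1] [Ring A2] [Algebra ℂ A1] [Algebra ℂ A2]
    (P1 M1 : Subalgebra ℂ A1) (P2 M2 : Subalgebra ℂ A2)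
    (θ1 : A1 →ₛₗ[starRingEnd ℂ] A1) (θ2 : A2 →ₛₗ[starRingEnd ℂ] A2)
    (hθ1mul : ∀ x y : A1, θ1 (x * y) = θ1 x * θ1 y)
    (hθ2mul : ∀ x y : A2, θ2 (x * y) = θ2 x * θ2 y)
    (hθ1θ : ∀ x : A1, θ1 (θ1 x) = x)
    (hθ2θ : ∀ x : A2, θ2 (θ2 x) = x)
    (hθ1map : ⇑θ1 '' (P1 : Set A1) = (M1 : Set A1))
    (hθ2map : ⇑θ2 '' (P2 : Set A2) = (M2 : Set A2))
    (hcomm1 : ∀ x ∈ P1, ∀ y ∈ M1, x * y = y * x)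
    (hcomm2 : ∀ x ∈ P2, ∀ y ∈ M2, x * y = y * x)
    (τ1 : A1 →ₗ[ℂ] ℂ) (τ2 : A2 →ₗ[ℂ] ℂ)
    (hRP1 : ∀ a ∈ P1, 0 ≤ τ1 (θ1 a * a))
    (hRP2 : ∀ a ∈ P2, 0 ≤ τ2 (θ2 a * a))
    (θ : (A1 ⊗[ℂ] A2) →ₛₗ[starRingEnd ℂ] (A1 ⊗[ℂ] A2))
    (hθ : ∀ (x : A1) (y : A2), θ (x ⊗ₜ y) = θ1 x ⊗ₜ θ2 y)
    (T : (A1 ⊗[ℂ] A2) →ₗ[ℂ] ℂ)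
    (hT : ∀ (x : A1) (y : A2), T (x ⊗ₜ y) = τ1 x * τ2 y) :
    ∀ c ∈ Submodule.span ℂ
        {z : A1 ⊗[ℂ] A2 | ∃ x ∈ P1, ∃ y ∈ P2, z = x ⊗ₜ y},
      0 ≤ T (θ c * c) :=
  tensor_product_reflection_positive_general P1 P2 θ1 θ2 τ1 τ2 hRP1 hRP2 θ hθ T hT
end

section
/- Let φ₁ : A₁ → ℂ and φ₂ : A₂ → ℂ be linear functionals on unital complex *-algebras that are positive (φ(a*a) ≥ 0 for all a). Then the free product functional φ₁ * φ₂ on the unital algebra free product A₁ * A₂, defined by requiring φ to restrict to φᵢ on Aᵢ and to vanish on alternating products of centered elements, is positive. -/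
/-!
Every element of the free product is a linear combination of reduced words: alternating products
of centered letters. For reduced words `w = a₁ ⋯ aₘ` and `v = b₁ ⋯ bₙ`, multiplying out `w* v`
merges the two innermost letters `aₖ* bₖ = (aₖ* bₖ)° + φᵢ(aₖ* bₖ)`; the centered part leaves a
reduced word, on which `φ` vanishes, so `φ(w* v) = ∏ₖ φ_{i(k)}(aₖ* bₖ)` if the index sequences of
`w` and `v` agree and `0` otherwise. Peeling off the first letters writes this kernel on words as
`E + H ⊙ K'`, where `E` and the head kernel `H` are Gram matrices of positive functionals and `K'`
is the kernel on the tails. By induction on the length and the Schur product theorem the kernel is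
positive semidefinite, and `φ(x* x)` is its quadratic form at the coefficients of `x`.
-/

open scoped ComplexOrder

open LinearAlgebra Matrix

theorem LinearAlgebra.FreeProduct.subalgebra_eq_top_of_ι_mem {R I : Type*} [CommSemiring R]
    [DecidableEq I] {A : I → Type*} [∀ i, Semiring (A i)] [∀ i, Algebra R (A i)]
    (M : Subalgebra R (FreeProduct R A)) (hM : ∀ i (a : A i), FreeProduct.ι R A i a ∈ M) :
    M = ⊤ := by
  let ιM : {i : I} → A i →ₐ[R] M := fun {i} => (FreeProduct.ι R A i).codRestrict M (hM i)
  have hval : M.val.comp (FreeProduct.lift R A ιM) = FreeProduct.lift R A (FreeProduct.ι R A _) :=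
    FreeProduct.lift_unique R A _ _ fun i => by
      ext a
      exact congrArg Subtype.val (AlgHom.congr_fun (FreeProduct.lift_comp_ι R A ιM) a)
  have hid : AlgHom.id R _ = FreeProduct.lift R A (FreeProduct.ι R A _) :=
    FreeProduct.lift_unique R A _ _ fun i => by ext; simp
  refine eq_top_iff.2 fun x _ => ?_
  rw [← AlgHom.id_apply (R := R) x, hid, ← hval]
  exact SetLike.coe_mem _

namespace FreeProductState

section PositiveFunctional

variable {B : Type*} [Ring B] [StarRing B] [Algebra ℂ B] [StarModule ℂ B] {f : B →ₗ[ℂ] ℂ}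

theorem conj_apply_star_mul (hf : ∀ b, 0 ≤ f (star b * b)) (x y : B) :
    starRingEnd ℂ (f (star x * y)) = f (star y * x) := by
  have real : ∀ z, starRingEnd ℂ (f (star z * z)) = f (star z * z) :=
    fun z => (IsSelfAdjoint.of_nonneg (hf z)).star_eq
  have h₁ := real (x + y)
  have h₂ := real (x + Complex.I • y)
  simp only [star_add, star_smul, add_mul, mul_add, smul_mul_assoc, mul_smul_comm,
    map_add, map_smul, smul_eq_mul, map_mul, map_neg, Complex.star_def, Complex.conj_I, neg_neg,
    real x, real y] at h₁ h₂
  linear_combination (h₁ + Complex.I * h₂ - (starRingEnd ℂ (f (star y * x))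
    - starRingEnd ℂ (f (star x * y)) + f (star y * x) - f (star x * y)) * Complex.I_mul_I) / 2

theorem apply_star (hf : ∀ b, 0 ≤ f (star b * b)) (a : B) : f (star a) = starRingEnd ℂ (f a) := by
  simpa using (conj_apply_star_mul hf 1 a).symm

theorem posSemidef_gram (hf : ∀ b, 0 ≤ f (star b * b)) {ι : Type*} (g : ι → B) :
    (of fun j k => f (star (g j) * g k)).PosSemidef := by
  refine ⟨?_, fun x => ?_⟩
  · ext j k
    simp [conj_apply_star_mul hf]
  · convert hf (x.sum fun k c => c • g k) using 1
    simp only [Finsupp.sum, star_sum, star_smul, Finset.sum_mul, Finset.mul_sum, smul_mul_smul_comm,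
      map_sum, map_smul, smul_eq_mul, of_apply, Complex.star_def]
    rw [Finset.sum_comm]
    exact Finset.sum_congr rfl fun _ _ => Finset.sum_congr rfl fun _ _ => by ring

end PositiveFunctional

section Words

variable {I : Type*} {A : I → Type*}

abbrev Word (A : I → Type*) := List (Σ i, A i)

def Word.IsAlternating (l : Word A) : Prop := l.IsChain fun p q => p.1 ≠ q.1

theorem Word.isAlternating_cons {p : Σ i, A i} {l : Word A} :
    Word.IsAlternating (p :: l) ↔ (∀ q ∈ l.head?, p.1 ≠ q.1) ∧ l.IsAlternating :=
  List.isChain_cons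

def Word.adjoint [∀ i, Star (A i)] (l : Word A) : Word A :=
  (l.map fun p => ⟨p.1, star p.2⟩).reverse

@[simp] theorem Word.adjoint_nil [∀ i, Star (A i)] : Word.adjoint ([] : Word A) = [] := rfl

@[simp] theorem Word.adjoint_cons [∀ i, Star (A i)] (p : Σ i, A i) (l : Word A) :
    Word.adjoint (p :: l) = l.adjoint ++ [⟨p.1, star p.2⟩] := by
  simp [Word.adjoint]

theorem Word.IsAlternating.adjoint_append [∀ i, Star (A i)] {w v : Word A}
    (hw : w.IsAlternating) (hv : v.IsAlternating)
    (hhead : ∀ p ∈ w.head?, ∀ q ∈ v.head?, p.1 ≠ q.1) : (w.adjoint ++ v).IsAlternating := by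
  refine List.IsChain.append ?_ hv ?_
  · rw [Word.adjoint, List.isChain_reverse, List.isChain_map]
    exact hw.imp fun {_ _} h h' => h h'.symm
  · simp only [Word.adjoint, List.getLast?_reverse, List.head?_map, Option.mem_map]
    rintro _ ⟨p, hp, rfl⟩ q hq
    exact hhead p hp q hq

variable [∀ i, Ring (A i)] [∀ i, Algebra ℂ (A i)] (φi : ∀ i, A i →ₗ[ℂ] ℂ)

def Word.IsCentered (l : Word A) : Prop := ∀ p ∈ l, φi p.1 p.2 = 0

variable {φi} in
theorem Word.isCentered_cons {p : Σ i, A i} {l : Word A} :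
    Word.IsCentered φi (p :: l) ↔ φi p.1 p.2 = 0 ∧ l.IsCentered φi :=
  List.forall_mem_cons

def reducedWords : Set (Word A) := {l | l.IsAlternating ∧ l.IsCentered φi}

variable {φi} in
theorem cons_mem_reducedWords {p : Σ i, A i} {l : Word A} :
    p :: l ∈ reducedWords φi ↔
      (∀ q ∈ l.head?, p.1 ≠ q.1) ∧ φi p.1 p.2 = 0 ∧ l ∈ reducedWords φi := by
  simp only [reducedWords, Set.mem_ofPred_eq, Word.isAlternating_cons, Word.isCentered_cons]
  tauto

def centering (i : I) (a : A i) : A i := a - φi i a • 1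

theorem apply_centering {i : I} (hφi_one : φi i 1 = 1) (a : A i) :
    φi i (centering φi i a) = 0 := by
  simp [centering, hφi_one]

variable {φi}

theorem adjoint_append_mem_reducedWords [∀ i, StarRing (A i)] [∀ i, StarModule ℂ (A i)]
    (hφi_pos : ∀ i (a : A i), 0 ≤ φi i (star a * a)) {w v : Word A} (hw : w ∈ reducedWords φi)
    (hv : v ∈ reducedWords φi) (hhead : ∀ p ∈ w.head?, ∀ q ∈ v.head?, p.1 ≠ q.1) :
    w.adjoint ++ v ∈ reducedWords φi := by
  refine ⟨hw.1.adjoint_append hv.1 hhead, fun p hp => ?_⟩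
  rcases List.mem_append.1 hp with hp | hp
  · simp only [Word.adjoint, List.mem_reverse, List.mem_map] at hp
    obtain ⟨q, hq, rfl⟩ := hp
    rw [apply_star (hφi_pos q.1), hw.2 q hq, map_zero]
  · exact hv.2 p hp

variable [DecidableEq I]

noncomputable def Word.eval (l : Word A) : FreeProduct ℂ A :=
  (l.map fun p => FreeProduct.ι ℂ A p.1 p.2).prod

@[simp] theorem Word.eval_nil : Word.eval ([] : Word A) = 1 := rfl

@[simp] theorem Word.eval_cons (p : Σ i, A i) (l : Word A) :
    Word.eval (p :: l) = FreeProduct.ι ℂ A p.1 p.2 * l.eval := by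
  simp [Word.eval]

@[simp] theorem Word.eval_append (l₁ l₂ : Word A) :
    Word.eval (l₁ ++ l₂) = l₁.eval * l₂.eval := by
  simp [Word.eval]

theorem Word.eval_adjoint [∀ i, Star (A i)] (S : FreeProduct ℂ A →ₛₗ[starRingEnd ℂ] FreeProduct ℂ A)
    (hS_one : S 1 = 1) (hSmul : ∀ x y, S (x * y) = S y * S x)
    (hSι : ∀ i (a : A i), S (FreeProduct.ι ℂ A i a) = FreeProduct.ι ℂ A i (star a)) (l : Word A) :
    S l.eval = l.adjoint.eval := by
  induction l with
  | nil => exact hS_one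
  | cons p l ih => simp [hSmul, ih, hSι]

theorem eval_eq_zero_of_forall_ofFn (φ : FreeProduct ℂ A →ₗ[ℂ] ℂ)
    (hφ : ∀ (n : ℕ) (idx : Fin n → I)
      (_ : ∀ (k : Fin n) (h : (k : ℕ) + 1 < n), idx k ≠ idx ⟨(k : ℕ) + 1, h⟩)
      (a : ∀ k, A (idx k)), 0 < n → (∀ k, φi (idx k) (a k) = 0) →
      φ ((List.ofFn fun k => FreeProduct.ι ℂ A (idx k) (a k)).prod) = 0)
    {l : Word A} (hne : l ≠ []) (hl : l ∈ reducedWords φi) : φ l.eval = 0 := by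
  have key := hφ l.length (fun k => l[k].1)
    (fun k h => (List.isChain_iff_getElem.1 hl.1) k (by omega))
    (fun k => l[k].2) (List.length_pos_iff.2 hne) fun k => hl.2 _ (List.getElem_mem _)
  rwa [Word.eval, ← List.ofFn_getElem_eq_map]

variable (φi) in
theorem ι_eq_ι_centering_add (i : I) (a : A i) :
    FreeProduct.ι ℂ A i a = FreeProduct.ι ℂ A i (centering φi i a) + φi i a • 1 := by
  simp [centering]

theorem eval_adjoint_cons_mul_eval_cons [∀ i, Star (A i)] {i : I} (a b : A i) (w v : Word A) :
    Word.eval (Word.adjoint (⟨i, a⟩ :: w)) * Word.eval (⟨i, b⟩ :: v) =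
      Word.eval (w.adjoint ++ ⟨i, centering φi i (star a * b)⟩ :: v)
        + φi i (star a * b) • (w.adjoint.eval * v.eval) := by
  have hmerge : FreeProduct.ι ℂ A i (star a) * FreeProduct.ι ℂ A i b =
      FreeProduct.ι ℂ A i (centering φi i (star a * b)) + φi i (star a * b) • 1 := by
    rw [← map_mul, ← ι_eq_ι_centering_add]
  simp only [Word.adjoint_cons, Word.eval_append, Word.eval_cons, Word.eval_nil, mul_one,
    mul_assoc, ← mul_assoc (FreeProduct.ι ℂ A i (star a)), hmerge]
  simp only [add_mul, mul_add, smul_mul_assoc, one_mul, mul_smul_comm]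

section Span

variable (hφi_one : ∀ i, φi i 1 = 1)
include hφi_one

theorem ι_mul_eval_mem_span_of_head_ne {i : I} (a : A i) {l : Word A}
    (hl : l ∈ reducedWords φi) (hhead : ∀ q ∈ l.head?, i ≠ q.1) :
    FreeProduct.ι ℂ A i a * l.eval ∈ Submodule.span ℂ (Word.eval '' reducedWords φi) := by
  have hcons : ⟨i, centering φi i a⟩ :: l ∈ reducedWords φi :=
    cons_mem_reducedWords.2 ⟨hhead, apply_centering φi (hφi_one i) a, hl⟩
  rw [ι_eq_ι_centering_add φi, add_mul, smul_mul_assoc, one_mul]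
  exact add_mem (Submodule.subset_span ⟨_, hcons, by simp⟩)
    (Submodule.smul_mem _ _ (Submodule.subset_span ⟨l, hl, rfl⟩))

theorem ι_mul_eval_mem_span {i : I} (a : A i) {l : Word A} (hl : l ∈ reducedWords φi) :
    FreeProduct.ι ℂ A i a * l.eval ∈ Submodule.span ℂ (Word.eval '' reducedWords φi) := by
  match l, hl with
  | [], hl => exact ι_mul_eval_mem_span_of_head_ne hφi_one a hl (by simp)
  | ⟨j, b⟩ :: t, hl =>
    by_cases hij : i = j
    · subst hij
      obtain ⟨hhead, -, ht⟩ := cons_mem_reducedWords.1 hl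
      rw [Word.eval_cons, ← mul_assoc, ← map_mul]
      exact ι_mul_eval_mem_span_of_head_ne hφi_one _ ht hhead
    · exact ι_mul_eval_mem_span_of_head_ne hφi_one a hl (by simpa using hij)

theorem mem_span_reducedWords (x : FreeProduct ℂ A) :
    x ∈ Submodule.span ℂ (Word.eval '' reducedWords φi) := by
  set V := Submodule.span ℂ (Word.eval '' reducedWords φi)
  let M : Subalgebra ℂ (FreeProduct ℂ A) :=
    { carrier := {y | ∀ z ∈ V, y * z ∈ V}
      mul_mem' := fun hy hy' z hz => mul_assoc _ _ z ▸ hy _ (hy' z hz)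
      add_mem' := fun hy hy' z hz => add_mul _ _ z ▸ add_mem (hy z hz) (hy' z hz)
      algebraMap_mem' := fun c z hz => Algebra.smul_def c z ▸ V.smul_mem c hz }
  have hM : M = ⊤ := FreeProduct.subalgebra_eq_top_of_ι_mem M fun i a =>
    Submodule.span_le (p := V.comap (LinearMap.mulLeft ℂ (FreeProduct.ι ℂ A i a))).2
      (by rintro _ ⟨l, hl, rfl⟩; exact ι_mul_eval_mem_span hφi_one a hl)
  have hx : x ∈ M := hM ▸ Algebra.mem_top
  simpa using hx 1 (Submodule.subset_span ⟨[], ⟨List.isChain_nil, by simp [Word.IsCentered]⟩, rfl⟩)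

end Span

end Words

section Pairing

variable {I : Type*} [Fintype I] {A : I → Type*} [∀ i, Ring (A i)] [∀ i, Algebra ℂ (A i)]
  {φi : ∀ i, A i →ₗ[ℂ] ℂ}

variable (φi) in
noncomputable def piFunctional : (∀ i, A i) →ₗ[ℂ] ℂ := ∑ i, (φi i).comp (LinearMap.proj i)

theorem piFunctional_apply (x : ∀ i, A i) : piFunctional φi x = ∑ i, φi i (x i) := by
  simp [piFunctional]

variable [∀ i, StarRing (A i)]

theorem piFunctional_star_mul_self_nonneg (hφi_pos : ∀ i (a : A i), 0 ≤ φi i (star a * a))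
    (x : ∀ i, A i) : 0 ≤ piFunctional φi (star x * x) := by
  rw [piFunctional_apply]
  exact Finset.sum_nonneg fun i _ => hφi_pos i (x i)

variable [DecidableEq I]

theorem piFunctional_star_single_mul_single_self {i : I} (a b : A i) :
    piFunctional φi (star (Pi.single i a) * Pi.single i b) = φi i (star a * b) := by
  rw [← Pi.single_star, ← Pi.single_mul, piFunctional_apply,
    Finset.sum_eq_single_of_mem i (Finset.mem_univ i) fun j _ hj => by
      rw [Pi.single_eq_of_ne hj, map_zero], Pi.single_eq_same]

theorem piFunctional_star_single_mul_single_of_ne {i j : I} (hij : i ≠ j) (a : A i) (b : A j) :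
    piFunctional φi (star (Pi.single i a) * Pi.single j b) = 0 := by
  have hzero : star (Pi.single i a) * Pi.single j b = 0 := by
    ext k
    rcases eq_or_ne k i with rfl | hki
    · simp [Pi.single_eq_of_ne hij]
    · simp [Pi.single_eq_of_ne hki]
  rw [hzero, map_zero]

/-- Letters are embedded in `Π i, A i` by `Pi.single`, so that the pairing of two letters is the
Gram form of the positive functional `piFunctional φi`. -/
noncomputable def wordPairing (φi : ∀ i, A i →ₗ[ℂ] ℂ) : Word A → Word A → ℂ
  | [], [] => 1
  | p :: w, q :: v =>
      piFunctional φi (star (Pi.single p.1 p.2) * Pi.single q.1 q.2) * wordPairing φi w v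
  | _, _ => 0

@[simp] theorem wordPairing_nil_cons (q : Σ i, A i) (v : Word A) :
    wordPairing φi [] (q :: v) = 0 := rfl

@[simp] theorem wordPairing_cons_nil (p : Σ i, A i) (w : Word A) :
    wordPairing φi (p :: w) [] = 0 := rfl

theorem wordPairing_cons_cons_self {i : I} (a b : A i) (w v : Word A) :
    wordPairing φi (⟨i, a⟩ :: w) (⟨i, b⟩ :: v) = φi i (star a * b) * wordPairing φi w v := by
  rw [wordPairing, piFunctional_star_single_mul_single_self]

theorem wordPairing_cons_cons_of_ne {i j : I} (hij : i ≠ j) (a : A i) (b : A j) (w v : Word A) :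
    wordPairing φi (⟨i, a⟩ :: w) (⟨j, b⟩ :: v) = 0 := by
  rw [wordPairing, piFunctional_star_single_mul_single_of_ne hij, zero_mul]

def headVector : Word A → ∀ i, A i
  | [] => 0
  | p :: _ => Pi.single p.1 p.2

def nilIndicator : Word A → ℂ
  | [] => 1
  | _ :: _ => 0

theorem wordPairing_eq_add_mul_tail (w v : Word A) :
    wordPairing φi w v = star (nilIndicator w) * nilIndicator v
      + piFunctional φi (star (headVector w) * headVector v) * wordPairing φi w.tail v.tail := by
  cases w <;> cases v <;> simp [wordPairing, headVector, nilIndicator]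

variable [∀ i, StarModule ℂ (A i)] (hφi_pos : ∀ i (a : A i), 0 ≤ φi i (star a * a))
include hφi_pos

theorem apply_eval_adjoint_mul_eval (hφi_one : ∀ i, φi i 1 = 1) (φ : FreeProduct ℂ A →ₗ[ℂ] ℂ)
    (hφ_one : φ 1 = 1) (hφ_vanish : ∀ l : Word A, l ≠ [] → l ∈ reducedWords φi → φ l.eval = 0)
    {w v : Word A} (hw : w ∈ reducedWords φi) (hv : v ∈ reducedWords φi) :
    φ (w.adjoint.eval * v.eval) = wordPairing φi w v := by
  induction w generalizing v with
  | nil =>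
    cases v with
    | nil => simpa [wordPairing] using hφ_one
    | cons q v => simpa using hφ_vanish _ (List.cons_ne_nil _ _) hv
  | cons p w ih =>
    obtain ⟨i, a⟩ := p
    obtain ⟨hwhead, -, hw'⟩ := cons_mem_reducedWords.1 hw
    cases v with
    | nil =>
      have hwv := adjoint_append_mem_reducedWords hφi_pos hw hv (by simp)
      rw [List.append_nil] at hwv
      simpa using hφ_vanish _ (by simp) hwv
    | cons q v =>
      obtain ⟨j, b⟩ := q
      by_cases hij : i = j
      · subst hij
        obtain ⟨hvhead, -, hv'⟩ := cons_mem_reducedWords.1 hv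
        have hcv : ⟨i, centering φi i (star a * b)⟩ :: v ∈ reducedWords φi :=
          cons_mem_reducedWords.2 ⟨hvhead, apply_centering φi (hφi_one i) _, hv'⟩
        have hhead : ∀ p ∈ w.head?, ∀ q ∈ (⟨i, centering φi i (star a * b)⟩ :: v).head?,
            p.1 ≠ q.1 := by
          simpa [eq_comm] using hwhead
        rw [eval_adjoint_cons_mul_eval_cons, map_add, map_smul,
          hφ_vanish _ (by simp) (adjoint_append_mem_reducedWords hφi_pos hw' hcv hhead),
          ih hw' hv', wordPairing_cons_cons_self, zero_add, smul_eq_mul]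
      · rw [← Word.eval_append, wordPairing_cons_cons_of_ne hij]
        exact hφ_vanish _ (by simp)
          (adjoint_append_mem_reducedWords hφi_pos hw hv (by simpa using hij))

theorem posSemidef_wordPairing_of_length_le {ι : Type*} (N : ℕ) (L : ι → Word A)
    (hL : ∀ j, (L j).length ≤ N) : (of fun j k => wordPairing φi (L j) (L k)).PosSemidef := by
  have hnilGram := posSemidef_gram (f := LinearMap.id) (ι := ι) star_mul_self_nonneg
  induction N generalizing L with
  | zero =>
    have hnil : ∀ j, L j = [] := fun j => List.eq_nil_of_length_eq_zero (Nat.le_zero.1 (hL j))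
    simpa [hnil, nilIndicator, wordPairing] using hnilGram fun j => nilIndicator (L j)
  | succ N ih =>
    have hsplit : of (fun j k => wordPairing φi (L j) (L k)) =
        of (fun j k => (LinearMap.id : ℂ →ₗ[ℂ] ℂ) (star (nilIndicator (L j)) * nilIndicator (L k)))
          + of (fun j k => piFunctional φi (star (headVector (L j)) * headVector (L k))) ⊙
            of fun j k => wordPairing φi (L j).tail (L k).tail := by
      ext j k
      exact wordPairing_eq_add_mul_tail _ _
    rw [hsplit]
    exact (hnilGram _).add ((posSemidef_gram (piFunctional_star_mul_self_nonneg hφi_pos) _).hadamard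
      (ih _ fun j => by grind [List.length_tail]))

theorem posSemidef_wordPairing : (of (wordPairing φi)).PosSemidef := by
  have hbounded (N : ℕ) := posSemidef_wordPairing_of_length_le hφi_pos N
    (Subtype.val : {w : Word A // w.length ≤ N} → Word A) fun w => w.2
  refine ⟨?_, fun x => ?_⟩
  · ext w v
    exact congr_fun₂ (hbounded (max w.length v.length)).1 ⟨w, le_max_left _ _⟩ ⟨v, le_max_right _ _⟩
  · have hx : ∀ w ∈ x.support, w.length ≤ x.support.sup List.length := fun w hw => Finset.le_sup hw
    have hsum (u : Word A) (c : ℂ) := Finsupp.sum_subtypeDomain_index hx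
      (h := fun v d => star c * wordPairing φi u v * d)
    have := (hbounded (x.support.sup List.length)).2 (x.subtypeDomain fun w => w.length ≤ _)
    simp only [of_apply, hsum] at this
    rwa [Finsupp.sum_subtypeDomain_index hx
      (h := fun u c => x.sum fun v d => star c * wordPairing φi u v * d)] at this

end Pairing

theorem apply_map_linearCombination_mul_linearCombination {M ι : Type*} [Ring M] [Algebra ℂ M]
    (S : M →ₛₗ[starRingEnd ℂ] M) (φ : M →ₗ[ℂ] ℂ) (e : ι → M) (c : ι →₀ ℂ) :
    φ (S (Finsupp.linearCombination ℂ e c) * Finsupp.linearCombination ℂ e c) =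
      c.sum fun u a => c.sum fun v b => star a * φ (S (e u) * e v) * b := by
  simp only [Finsupp.linearCombination_apply, map_finsuppSum, Finsupp.sum_mul, Finsupp.mul_sum,
    LinearMap.map_smulₛₗ, smul_mul_smul_comm, map_smul, smul_eq_mul, Complex.star_def]
  rw [Finsupp.sum_comm]
  exact Finsupp.sum_congr fun _ _ => Finsupp.sum_congr fun _ _ => by ring

end FreeProductState

open FreeProductState in
theorem free_product_functional_positive_general
    (A : Fin 2 → Type*) [∀ i, Ring (A i)] [∀ i, Algebra ℂ (A i)]
    [∀ i, StarRing (A i)] [∀ i, StarModule ℂ (A i)]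
    (φi : ∀ i, A i →ₗ[ℂ] ℂ)
    (hφi_pos : ∀ i (a : A i), 0 ≤ φi i (star a * a))
    (hφi_one : ∀ i, φi i 1 = 1)
    -- the star operation on the free product, induced by the stars of the factors
    (S : FreeProduct ℂ A →ₛₗ[starRingEnd ℂ] FreeProduct ℂ A)
    (hSmul : ∀ x y : FreeProduct ℂ A, S (x * y) = S y * S x)
    (hSι : ∀ (i : Fin 2) (a : A i),
      S (FreeProduct.ι ℂ A i a) = FreeProduct.ι ℂ A i (star a))
    -- the free product functional
    (φ : FreeProduct ℂ A →ₗ[ℂ] ℂ)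
    (hφ_one : φ 1 = 1)
    (hφ_vanish : ∀ (n : ℕ) (idx : Fin n → Fin 2)
      (_halt : ∀ (k : Fin n) (h : (k : ℕ) + 1 < n), idx k ≠ idx ⟨(k : ℕ) + 1, h⟩)
      (a : ∀ k, A (idx k)), 0 < n → (∀ k, φi (idx k) (a k) = 0) →
      φ ((List.ofFn fun k => FreeProduct.ι ℂ A (idx k) (a k)).prod) = 0) :
    ∀ x : FreeProduct ℂ A, 0 ≤ φ (S x * x) := by
  intro x
  have hS_one : S 1 = 1 := by simpa using hSι 0 1
  have hpairing {u v : Word A} (hu : u ∈ reducedWords φi) (hv : v ∈ reducedWords φi) :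
      φ (S u.eval * v.eval) = wordPairing φi u v := by
    rw [Word.eval_adjoint S hS_one hSmul hSι]
    exact apply_eval_adjoint_mul_eval hφi_pos hφi_one φ hφ_one
      (fun l hne hl => eval_eq_zero_of_forall_ofFn φ hφ_vanish hne hl) hu hv
  obtain ⟨c, hc, rfl⟩ :=
    (Finsupp.mem_span_image_iff_linearCombination ℂ).1 (mem_span_reducedWords hφi_one x)
  rw [apply_map_linearCombination_mul_linearCombination]
  convert (posSemidef_wordPairing hφi_pos).2 c using 1
  exact Finsupp.sum_congr fun u hu => Finsupp.sum_congr fun v hv => by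
    rw [hpairing (hc hu) (hc hv), of_apply]

/-- Positivity of the free product functional (Nica–Speicher, Theorem 6.13):
if `φ₁, φ₂` are positive linear functionals on unital complex `*`-algebras,
then the free product functional — the functional on the unital algebra free
product that restricts to the `φᵢ` and vanishes on alternating products of
centered elements — is positive. -/
theorem free_product_functional_positive
    (A : Fin 2 → Type*) [∀ i, Ring (A i)] [∀ i, Algebra ℂ (A i)]
    [∀ i, StarRing (A i)] [∀ i, StarModule ℂ (A i)]
    (φi : ∀ i, A i →ₗ[ℂ] ℂ)
    (hφi_pos : ∀ i (a : A i), 0 ≤ φi i (star a * a))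
    (hφi_one : ∀ i, φi i 1 = 1)
    -- the star operation on the free product, induced by the stars of the factors
    (S : FreeProduct ℂ A →ₛₗ[starRingEnd ℂ] FreeProduct ℂ A)
    (hSmul : ∀ x y : FreeProduct ℂ A, S (x * y) = S y * S x)
    (hSι : ∀ (i : Fin 2) (a : A i),
      S (FreeProduct.ι ℂ A i a) = FreeProduct.ι ℂ A i (star a))
    -- the free product functional
    (φ : FreeProduct ℂ A →ₗ[ℂ] ℂ)
    (hφ_one : φ 1 = 1)
    (hφ_restrict : ∀ (i : Fin 2) (a : A i), φ (FreeProduct.ι ℂ A i a) = φi i a)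
    (hφ_vanish : ∀ (n : ℕ) (idx : Fin n → Fin 2)
      (_halt : ∀ (k : Fin n) (h : (k : ℕ) + 1 < n), idx k ≠ idx ⟨(k : ℕ) + 1, h⟩)
      (a : ∀ k, A (idx k)), 0 < n → (∀ k, φi (idx k) (a k) = 0) →
      φ ((List.ofFn fun k => FreeProduct.ι ℂ A (idx k) (a k)).prod) = 0) :
    ∀ x : FreeProduct ℂ A, 0 ≤ φ (S x * x) :=
  free_product_functional_positive_general A φi hφi_pos hφi_one S hSmul hSι φ hφ_one hφ_vanish
end

section
/- Main theorem: if for each i ∈ I the functional τᵢ is reflection positive with respect to (𝒜ᵢ, 𝒜ᵢ⁺, 𝒜ᵢ⁻, θᵢ), then the bi-free product functional τ on the bi-free product (𝒜, 𝒜⁺, 𝒜⁻, θ) = ∗_{i∈I}(𝒜ᵢ, 𝒜ᵢ⁺, 𝒜ᵢ⁻, θᵢ, τᵢ) is reflection positive: τ(θ(a)a) ≥ 0 for all a ∈ 𝒜⁺. -/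
/-!
Write `B(x, y) = τ(θ(x) y)`, a sesquilinear form on `𝒜`, and `a = ∑ cₗ wₗ` as a combination of
alternating centered words. Then `τ(θ(a) a) = c* G c` for the Gram matrix `G = (B(wₗ, wₘ))`, so
it suffices that `G` is positive semidefinite. By the moment formula, `B(wₗ, wₘ) = 0` unless `wₗ`
and `wₘ` have the same letter pattern `i(1), …, i(n)`, so `G` is block diagonal along patterns. On
the block of a pattern, `B(wₗ, wₘ) = ∏ₖ B(bₗₖ, bₘₖ)`: the block is the entrywise (Hadamard)
product of the Gram matrices of the letters, which are positive semidefinite by reflection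
positivity of the `τ_{i(k)}`, so the block is positive semidefinite by the Schur product theorem.
-/

open scoped ComplexOrder Matrix

namespace Matrix

theorem PosSemidef.of_dotProduct_mulVec_nonneg_complex {n : Type*} [Fintype n]
    {A : Matrix n n ℂ} (hA : ∀ x, 0 ≤ star x ⬝ᵥ (A *ᵥ x)) : A.PosSemidef := by
  classical
  -- over `ℂ` a quadratic form with real values comes from a Hermitian matrix (polarization)
  refine .of_dotProduct_mulVec_nonneg ?_ hA
  rw [← isSymmetric_toEuclideanLin_iff, LinearMap.isSymmetric_iff_inner_map_self_real]
  intro v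
  rw [EuclideanSpace.inner_eq_star_dotProduct, ofLp_toLpLin, toLin'_apply,
    Complex.conj_eq_iff_im, dotProduct_star, dotProduct_comm, Complex.star_def, Complex.conj_im,
    ← (Complex.nonneg_iff.mp (hA _)).2, neg_zero]

theorem posSemidef_entrywise_prod {ι κ 𝕜 : Type*} [Fintype ι] [RCLike 𝕜] (s : Finset κ)
    (M : κ → Matrix ι ι 𝕜) (hM : ∀ k ∈ s, (M k).PosSemidef) :
    (of fun l m => ∏ k ∈ s, M k l m).PosSemidef := by
  classical
  induction s using Finset.induction_on with
  | empty => simpa [vecMulVec] using posSemidef_vecMulVec_self_star (1 : ι → 𝕜)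
  | insert a s ha ih =>
    convert (hM a (s.mem_insert_self a)).hadamard (ih fun k hk => hM k (s.mem_insert_of_mem hk))
      using 1
    ext l m
    simp [Finset.prod_insert ha]

theorem PosSemidef.of_submatrix_fibers {ι κ R : Type*} [Fintype ι] [CommRing R] [PartialOrder R]
    [StarRing R] [AddLeftMono R] (G : Matrix ι ι R) (P : ι → κ)
    (hG : ∀ l m, P l ≠ P m → G l m = 0)
    (hblock : ∀ l, (G.submatrix (Subtype.val : {m // P m = P l} → ι) Subtype.val).PosSemidef) :
    G.PosSemidef := by
  classical
  refine .of_dotProduct_mulVec_nonneg ?_ fun x => ?_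
  · ext l m
    by_cases h : P l = P m
    · exact congrFun₂ (hblock m).isHermitian ⟨l, h⟩ ⟨m, rfl⟩
    · simp [hG l m h, hG m l (Ne.symm h)]
  have hfiber (p : κ) (f : ι → R) :
      ∑ l ∈ Finset.univ with P l = p, f l = ∑ l : {l // P l = p}, f l :=
    Finset.sum_subtype _ (by simp) f
  have hrow (l : ι) : (G *ᵥ x) l = ∑ m : {m // P m = P l}, G l m * x m := by
    rw [mulVec, dotProduct, ← hfiber (P l) fun m => G l m * x m, Finset.sum_filter_of_ne]
    intro m _ hm
    by_contra h
    exact hm (by rw [hG l m (Ne.symm h), zero_mul])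
  calc (0 : R)
      ≤ ∑ p ∈ Finset.univ.image P, ∑ l : {l // P l = p},
          star x l * ∑ m : {m // P m = p}, G l m * x m := by
        refine Finset.sum_nonneg fun p hp => ?_
        obtain ⟨l₀, -, rfl⟩ := Finset.mem_image.mp hp
        exact (hblock l₀).dotProduct_mulVec_nonneg fun m => x m
    _ = ∑ l, star x l * ∑ m : {m // P m = P l}, G l m * x m := by
        rw [← Finset.sum_fiberwise_of_maps_to fun l _ =>
          Finset.mem_image_of_mem P (Finset.mem_univ l)]
        refine Finset.sum_congr rfl fun p _ => ?_
        rw [hfiber]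
        refine Finset.sum_congr rfl fun ⟨l, hl⟩ _ => ?_
        subst hl
        rfl
    _ = star x ⬝ᵥ (G *ᵥ x) := by simp only [dotProduct, Pi.star_apply, hrow]

end Matrix

namespace LinearMap

variable {R M ι : Type*} [CommSemiring R] [StarRing R] [AddCommMonoid M] [Module R M]

def gramMatrix (B : M →ₗ⋆[R] M →ₗ[R] R) (u : ι → M) : Matrix ι ι R :=
  Matrix.of fun l m => B (u l) (u m)

theorem star_dotProduct_gramMatrix_mulVec [Fintype ι] (B : M →ₗ⋆[R] M →ₗ[R] R) (u : ι → M)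
    (x y : ι → R) :
    star x ⬝ᵥ (gramMatrix B u *ᵥ y) = B (∑ l, x l • u l) (∑ m, y m • u m) := by
  simp only [gramMatrix, dotProduct, Matrix.mulVec, Matrix.of_apply, Pi.star_apply, map_sum,
    map_smulₛₗ, LinearMap.sum_apply, LinearMap.smul_apply, smul_eq_mul, Finset.mul_sum,
    starRingEnd_apply, RingHom.id_apply]
  rw [Finset.sum_comm]
  refine Finset.sum_congr rfl fun l _ => Finset.sum_congr rfl fun m _ => ?_
  ring

theorem IsNonneg.posSemidef_gramMatrix {E : Type*} [AddCommGroup E] [Module ℂ E] [Fintype ι]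
    {B : E →ₗ⋆[ℂ] E →ₗ[ℂ] ℂ} (hB : B.IsNonneg) (u : ι → E) : (gramMatrix B u).PosSemidef :=
  .of_dotProduct_mulVec_nonneg_complex fun x => by
    rw [star_dotProduct_gramMatrix_mulVec]
    exact hB.1 _

end LinearMap

section BifreeProduct

variable {I 𝒜 : Type*} [Ring 𝒜] [Algebra ℂ 𝒜] {Ap : I → Type*} [∀ i, Ring (Ap i)]
  [∀ i, Algebra ℂ (Ap i)]

def reflectionForm (θ : 𝒜 →ₛₗ[starRingEnd ℂ] 𝒜) (τ : 𝒜 →ₗ[ℂ] ℂ) : 𝒜 →ₗ⋆[ℂ] 𝒜 →ₗ[ℂ] ℂ :=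
  ((LinearMap.mul ℂ 𝒜).compr₂ τ).comp θ

@[simp]
theorem reflectionForm_apply (θ : 𝒜 →ₛₗ[starRingEnd ℂ] 𝒜) (τ : 𝒜 →ₗ[ℂ] ℂ) (x y : 𝒜) :
    reflectionForm θ τ x y = τ (θ x * y) :=
  rfl

def IsAlternating {n : ℕ} (i : Fin n → I) : Prop :=
  ∀ (k : Fin n) (h : (k : ℕ) + 1 < n), i k ≠ i ⟨(k : ℕ) + 1, h⟩

variable (ιp : ∀ i, Ap i →ₐ[ℂ] 𝒜) (θ : 𝒜 →ₛₗ[starRingEnd ℂ] 𝒜) (τ : 𝒜 →ₗ[ℂ] ℂ)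

def word {n : ℕ} (i : Fin n → I) (b : ∀ k, Ap (i k)) : 𝒜 :=
  (List.ofFn fun k => ιp (i k) (b k)).reverse.prod

def centeredWords {n : ℕ} (i : Fin n → I) : Set 𝒜 :=
  {x | ∃ b : ∀ k, Ap (i k), (∀ k, τ (ιp (i k) (b k)) = 0) ∧ x = word ιp i b}

def HasBifreeMoments [DecidableEq I] : Prop :=
  ∀ (m n : ℕ) (j : Fin m → I) (i : Fin n → I) (a : ∀ k, Ap (j k)) (b : ∀ k, Ap (i k)),
    IsAlternating j → IsAlternating i →
    (∀ k, τ (ιp (j k) (a k)) = 0) → (∀ k, τ (ιp (i k) (b k)) = 0) →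
    reflectionForm θ τ (word ιp j a) (word ιp i b)
      = if h : m = n then
          ∏ k : Fin n,
            (if j (Fin.cast h.symm k) = i k then
              reflectionForm θ τ (ιp (j (Fin.cast h.symm k)) (a (Fin.cast h.symm k)))
                (ιp (i k) (b k))
            else 0)
        else 0

variable {ιp θ τ} [DecidableEq I]

theorem HasBifreeMoments.reflectionForm_eq_zero_of_ne (h : HasBifreeMoments ιp θ τ)
    {p q : Σ n, Fin n → I} (hp : IsAlternating p.2) (hq : IsAlternating q.2) (hpq : p ≠ q)
    {x y : 𝒜} (hx : x ∈ centeredWords ιp τ p.2) (hy : y ∈ centeredWords ιp τ q.2) :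
    reflectionForm θ τ x y = 0 := by
  obtain ⟨n, i⟩ := p
  obtain ⟨n', i'⟩ := q
  obtain ⟨a, ha, rfl⟩ := hx
  obtain ⟨b, hb, rfl⟩ := hy
  rw [h n n' i i' a b hp hq ha hb]
  split_ifs with hn
  · subst hn
    obtain ⟨k, hk⟩ : ∃ k, i k ≠ i' k := by
      by_contra! hii'
      exact hpq (congrArg _ (funext hii'))
    exact Finset.prod_eq_zero (Finset.mem_univ k) (if_neg hk)
  · rfl

theorem HasBifreeMoments.reflectionForm_word (h : HasBifreeMoments ιp θ τ) {n : ℕ}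
    {i : Fin n → I} (hi : IsAlternating i) {a b : ∀ k, Ap (i k)}
    (ha : ∀ k, τ (ιp (i k) (a k)) = 0) (hb : ∀ k, τ (ιp (i k) (b k)) = 0) :
    reflectionForm θ τ (word ιp i a) (word ιp i b)
      = ∏ k, reflectionForm θ τ (ιp (i k) (a k)) (ιp (i k) (b k)) := by
  rw [h n n i i a b hi hi ha hb, dif_pos rfl]
  exact Finset.prod_congr rfl fun k _ => if_pos rfl

theorem HasBifreeMoments.posSemidef_gramMatrix_of_pattern (h : HasBifreeMoments ιp θ τ)
    (hRP : ∀ (i : I) (x : Ap i), 0 ≤ reflectionForm θ τ (ιp i x) (ιp i x))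
    {n : ℕ} {i : Fin n → I} (hi : IsAlternating i) {κ : Type*} [Fintype κ] (u : κ → 𝒜)
    (hu : ∀ l, u l ∈ centeredWords ιp τ i) :
    (LinearMap.gramMatrix (reflectionForm θ τ) u).PosSemidef := by
  choose b hb hbu using hu
  have hprod : LinearMap.gramMatrix (reflectionForm θ τ) u = Matrix.of fun l m =>
      ∏ k ∈ Finset.univ,
        LinearMap.gramMatrix (reflectionForm θ τ) (fun l => ιp (i k) (b l k)) l m := by
    ext l m
    rw [LinearMap.gramMatrix, Matrix.of_apply, hbu l, hbu m,
      h.reflectionForm_word hi (hb l) (hb m)]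
    rfl
  rw [hprod]
  refine Matrix.posSemidef_entrywise_prod _ _ fun k _ => ?_
  exact LinearMap.IsNonneg.posSemidef_gramMatrix
    (B := ((reflectionForm θ τ).comp (ιp (i k)).toLinearMap).compl₂ (ιp (i k)).toLinearMap)
    ⟨hRP (i k)⟩ (fun l => b l k)

theorem HasBifreeMoments.posSemidef_gramMatrix (h : HasBifreeMoments ιp θ τ)
    (hRP : ∀ (i : I) (x : Ap i), 0 ≤ reflectionForm θ τ (ιp i x) (ιp i x))
    {κ : Type*} [Fintype κ] (u : κ → 𝒜)
    (hu : ∀ l, ∃ p : Σ n, Fin n → I, IsAlternating p.2 ∧ u l ∈ centeredWords ιp τ p.2) :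
    (LinearMap.gramMatrix (reflectionForm θ τ) u).PosSemidef := by
  choose P hP hPu using hu
  refine Matrix.PosSemidef.of_submatrix_fibers _ P
    (fun l m hlm => h.reflectionForm_eq_zero_of_ne (hP l) (hP m) hlm (hPu l) (hPu m)) fun l => ?_
  exact h.posSemidef_gramMatrix_of_pattern hRP (hP l) (fun m : {m // P m = P l} => u m)
    fun ⟨m, hm⟩ => (hm ▸ hPu m : u m ∈ centeredWords ιp τ (P l).2)

end BifreeProduct

/-- Main theorem: if each `τᵢ` is reflection positive with respect to
`(𝒜ᵢ, 𝒜ᵢ⁺, 𝒜ᵢ⁻, θᵢ)`, then the bi-free product functional `τ` — characterized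
by the moment formula
`τ(θ(aₘ)⋯θ(a₁)·bₙ⋯b₁) = δ_{mn} ∏ₖ δ_{i(k)j(k)} τ(θ(aₖ)bₖ)` on alternating
centered words — is reflection positive: `τ(θ(a)a) ≥ 0` for all `a ∈ 𝒜⁺`,
where `𝒜⁺` is the linear span of the alternating centered words. -/
theorem bifree_product_reflection_positive
    {I : Type*} [DecidableEq I] {𝒜 : Type*} [Ring 𝒜] [Algebra ℂ 𝒜]
    (Ap : I → Type*) [∀ i, Ring (Ap i)] [∀ i, Algebra ℂ (Ap i)]
    (ιp : ∀ i, Ap i →ₐ[ℂ] 𝒜)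
    (θ : 𝒜 →ₛₗ[starRingEnd ℂ] 𝒜)
    (hθmul : ∀ x y : 𝒜, θ (x * y) = θ x * θ y)
    (hθθ : ∀ x : 𝒜, θ (θ x) = x)
    (τ : 𝒜 →ₗ[ℂ] ℂ)
    -- the defining moment formula for the bi-free product state
    (hmoment : ∀ (m n : ℕ) (j : Fin m → I) (i : Fin n → I)
      (a : ∀ k, Ap (j k)) (b : ∀ k, Ap (i k)),
      (∀ (k : Fin m) (h : (k : ℕ) + 1 < m), j k ≠ j ⟨(k : ℕ) + 1, h⟩) →
      (∀ (k : Fin n) (h : (k : ℕ) + 1 < n), i k ≠ i ⟨(k : ℕ) + 1, h⟩) →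
      (∀ k, τ (ιp (j k) (a k)) = 0) → (∀ k, τ (ιp (i k) (b k)) = 0) →
      τ ((List.ofFn fun k => θ (ιp (j k) (a k))).reverse.prod *
          (List.ofFn fun k => ιp (i k) (b k)).reverse.prod)
        = if h : m = n then
            ∏ k : Fin n,
              (if j (Fin.cast h.symm k) = i k then
                τ (θ (ιp (j (Fin.cast h.symm k)) (a (Fin.cast h.symm k))) *
                    ιp (i k) (b k))
              else 0)
          else 0)
    -- reflection positivity of each `τᵢ` (as seen inside `𝒜`)
    (hRP : ∀ (i : I) (x : Ap i), 0 ≤ τ (θ (ιp i x) * ιp i x)) :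
    ∀ a ∈ Submodule.span ℂ
        {x : 𝒜 | ∃ (n : ℕ) (i : Fin n → I) (b : ∀ k, Ap (i k)),
          (∀ (k : Fin n) (h : (k : ℕ) + 1 < n), i k ≠ i ⟨(k : ℕ) + 1, h⟩) ∧
          (∀ k, τ (ιp (i k) (b k)) = 0) ∧
          x = (List.ofFn fun k => ιp (i k) (b k)).reverse.prod},
      0 ≤ τ (θ a * a) := by
  have hθ1 : θ 1 = 1 := by simpa [hθθ] using (hθmul (θ 1) 1).symm
  let θhom : 𝒜 →* 𝒜 := { toFun := θ, map_one' := hθ1, map_mul' := hθmul }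
  have hmoments : HasBifreeMoments ιp θ τ := fun m n j i a b hj hi ha hb => by
    have hθword : θ (word ιp j a) = (List.ofFn fun k => θ (ιp (j k) (a k))).reverse.prod := by
      change θhom _ = _
      rw [word, map_list_prod, List.map_reverse, List.map_ofFn]
      rfl
    rw [reflectionForm_apply, hθword]
    exact hmoment m n j i a b hj hi ha hb
  intro a ha
  obtain ⟨N, c, u, rfl⟩ := Submodule.mem_span_set'.mp ha
  have hu (l : Fin N) :
      ∃ p : Σ n, Fin n → I, IsAlternating p.2 ∧ (u l : 𝒜) ∈ centeredWords ιp τ p.2 := by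
    obtain ⟨n, i, b, hi, hb, hx⟩ := (u l).2
    exact ⟨⟨n, i⟩, hi, b, hb, hx⟩
  have := (hmoments.posSemidef_gramMatrix hRP _ hu).dotProduct_mulVec_nonneg c
  rwa [LinearMap.star_dotProduct_gramMatrix_mulVec] at this
end
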